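/- For every finite simple graph G and all integers d ≥ 0 and k ≥ 1, c_{⌈d/k⌉}(G) ≤ c_d(G^{(k)}). -/

import Mathlib

open SimpleGraph Set

namespace CopsRobbers

variable {V : Type}

/-- One step of a player in the game: stay put or move to an adjacent vertex. -/
def Step (G : SimpleGraph V) (a b : V) : Prop := a = b ∨ G.Adj a b

/-- `u` is within graph distance `d` of `v` in `G`. -/
def WithinDist (G : SimpleGraph V) (d : ℕ) (u v : V) : Prop :=
  ∃ w : G.Walk u v, w.length ≤ d

/-- `p` cops have a strategy on `G` that guarantees capturing the robber at distance `d`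
within finitely many rounds.  A cop strategy is a function `F` from the history of robber
positions to the positions of the `p` cops (`F []` gives the initial placement, chosen
before the robber places himself); the robber is modelled by an arbitrary trajectory
`r : ℕ → V` of vertices, each step staying put or moving along an edge.  Capture happens
if after some robber move, or after the cops' reply to it, some cop is within distance
`d` of the robber. -/
def CopsWin (G : SimpleGraph V) (d p : ℕ) : Prop :=
  ∃ F : List V → Fin p → V,
    (∀ (hist : List V) (x : V) (i : Fin p), Step G (F hist i) (F (hist ++ [x]) i)) ∧
    ∀ r : ℕ → V, (∀ n, Step G (r n) (r (n + 1))) →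
      ∃ (n : ℕ) (i : Fin p),
        WithinDist G d (F (List.ofFn fun m : Fin n => r m.val) i) (r n) ∨
        WithinDist G d (F (List.ofFn fun m : Fin (n + 1) => r m.val) i) (r n)

/-- The distance-`d` cop number of `G`: the least number of cops that can guarantee
capture at distance `d`. -/
noncomputable def copNumber (G : SimpleGraph V) (d : ℕ) : ℕ :=
  sInf { p | CopsWin G d p }

end CopsRobbers
namespace CopsRobbers

/-- A drawing of a finite simple graph in the plane: vertices go to distinct points, every
edge `uv` is drawn as a simple arc `arc u v` (parametrised on `[0,1]`, with
`arc v u` the reverse parametrisation) joining the endpoints, avoiding all vertex points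
in its interior, any two arcs meet in finitely many points, and no non-vertex point lies
on three or more arcs. -/
structure PlaneDrawing {V : Type} (G : SimpleGraph V) where
  vpos : V → ℝ × ℝ
  arc : V → V → ℝ → ℝ × ℝ
  vpos_inj : Function.Injective vpos
  arc_symm : ∀ u v, G.Adj u v → ∀ t : ℝ, arc u v t = arc v u (1 - t)
  arc_cont : ∀ u v, G.Adj u v → ContinuousOn (arc u v) (Set.Icc (0:ℝ) 1)
  arc_start : ∀ u v, G.Adj u v → arc u v 0 = vpos u
  arc_end : ∀ u v, G.Adj u v → arc u v 1 = vpos v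
  arc_injOn : ∀ u v, G.Adj u v → Set.InjOn (arc u v) (Set.Icc (0:ℝ) 1)
  arc_avoid : ∀ u v, G.Adj u v → ∀ t ∈ Set.Ioo (0:ℝ) 1, ∀ w, arc u v t ≠ vpos w
  finite_inter : ∀ u v w x, G.Adj u v → G.Adj w x → s(u, v) ≠ s(w, x) →
    (arc u v '' Set.Icc (0:ℝ) 1 ∩ arc w x '' Set.Icc (0:ℝ) 1).Finite
  no_triple : ∀ pt : ℝ × ℝ, pt ∉ Set.range vpos →
    ∀ u₁ v₁ u₂ v₂ u₃ v₃, G.Adj u₁ v₁ → G.Adj u₂ v₂ → G.Adj u₃ v₃ →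
      s(u₁, v₁) ≠ s(u₂, v₂) → s(u₁, v₁) ≠ s(u₃, v₃) → s(u₂, v₂) ≠ s(u₃, v₃) →
      ¬(pt ∈ arc u₁ v₁ '' Set.Icc (0:ℝ) 1 ∧ pt ∈ arc u₂ v₂ '' Set.Icc (0:ℝ) 1 ∧
        pt ∈ arc u₃ v₃ '' Set.Icc (0:ℝ) 1)

namespace PlaneDrawing

variable {V : Type} {G : SimpleGraph V}

/-- The edges `uv` and `wx` cross in the drawing: they are distinct edges sharing a point
interior to both arcs. -/
def Crosses (D : PlaneDrawing G) (u v w x : V) : Prop :=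
  G.Adj u v ∧ G.Adj w x ∧ s(u, v) ≠ s(w, x) ∧
    ∃ pt : ℝ × ℝ, pt ∈ D.arc u v '' Set.Ioo (0:ℝ) 1 ∧ pt ∈ D.arc w x '' Set.Ioo (0:ℝ) 1

/-- `e` is an uncrossed edge of the drawing. -/
def UncrossedE (D : PlaneDrawing G) (e : Sym2 V) : Prop :=
  ∀ a b w x, s(a, b) = e → ¬D.Crosses a b w x

/-- The set of crossing points lying on the edge `uv`. -/
def crossingPointsOn (D : PlaneDrawing G) (u v : V) : Set (ℝ × ℝ) :=
  { pt | pt ∈ D.arc u v '' Set.Ioo (0:ℝ) 1 ∧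
      ∃ w x, D.Crosses u v w x ∧ pt ∈ D.arc w x '' Set.Ioo (0:ℝ) 1 }

/-- `pt` is a crossing point of the drawing. -/
def IsCrossingPoint (D : PlaneDrawing G) (pt : ℝ × ℝ) : Prop :=
  ∃ u v w x, D.Crosses u v w x ∧ pt ∈ D.arc u v '' Set.Ioo (0:ℝ) 1 ∧
    pt ∈ D.arc w x '' Set.Ioo (0:ℝ) 1

/-- The drawing is `k`-plane: every edge is crossed at most `k` times. -/
def KPlane (D : PlaneDrawing G) (k : ℕ) : Prop :=
  ∀ u v, G.Adj u v → (D.crossingPointsOn u v).Finite ∧ (D.crossingPointsOn u v).ncard ≤ k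

/-- The drawing is 1-plane: every edge is crossed at most once, and (as usual) no two
edges sharing an endpoint cross, so every crossing has four distinct endpoints. -/
def OnePlane (D : PlaneDrawing G) : Prop :=
  D.KPlane 1 ∧ ∀ u v w x, D.Crosses u v w x → u ≠ w ∧ u ≠ x ∧ v ≠ w ∧ v ≠ x

/-- The parameter `X(G)` of the drawing: the least `n` such that for every crossing,
every pair of consecutive endpoints is joined by a path of length at most `n`. -/
noncomputable def Xparam (D : PlaneDrawing G) : ℕ :=
  sInf { n | ∀ u v w x, D.Crosses u v w x → ∀ a b : V, (a = u ∨ a = v) → (b = w ∨ b = x) →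
    ∃ p : G.Walk a b, p.length ≤ n }

/-- The parameter `x(G)` of the drawing: the least `n` such that for every crossing,
some pair of consecutive endpoints is joined by a path of length at most `n`. -/
noncomputable def xparam (D : PlaneDrawing G) : ℕ :=
  sInf { n | ∀ u v w x, D.Crosses u v w x → ∃ a b : V, (a = u ∨ a = v) ∧ (b = w ∨ b = x) ∧
    ∃ p : G.Walk a b, p.length ≤ n }

/-- The subset of the plane covered by the drawing. -/
def image (D : PlaneDrawing G) : Set (ℝ × ℝ) :=
  Set.range D.vpos ∪ ⋃ (u : V) (v : V) (_ : G.Adj u v), D.arc u v '' Set.Icc (0:ℝ) 1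

/-- Faces of the drawing: connected components of the complement. -/
def IsFace (D : PlaneDrawing G) (F : Set (ℝ × ℝ)) : Prop :=
  ∃ z ∉ D.image, F = connectedComponentIn D.imageᶜ z

/-- The subset of the plane covered by the arc of the (unordered) edge `e`. -/
def edgeArcSet (D : PlaneDrawing G) (e : Sym2 V) : Set (ℝ × ℝ) :=
  ⋃ (a : V) (b : V) (_ : G.Adj a b) (_ : s(a, b) = e), D.arc a b '' Set.Icc (0:ℝ) 1

/-- The skeleton of the drawing: the subgraph consisting of all uncrossed edges. -/
def skeleton (D : PlaneDrawing G) : SimpleGraph V where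
  Adj u v := G.Adj u v ∧ D.UncrossedE s(u, v)
  symm := by
    refine ⟨?_⟩
    intro u v h
    refine ⟨h.1.symm, ?_⟩
    rw [Sym2.eq_swap]
    exact h.2
  loopless := ⟨fun v h => G.loopless.irrefl v h.1⟩

/-- The subset of the plane covered by the drawing of the skeleton. -/
def skelImage (D : PlaneDrawing G) : Set (ℝ × ℝ) :=
  ⋃ (u : V) (v : V) (_ : G.Adj u v) (_ : D.UncrossedE s(u, v)), D.arc u v '' Set.Icc (0:ℝ) 1

/-- Faces of the skeleton: connected components of the complement of its drawing. -/
def IsSkelFace (D : PlaneDrawing G) (F : Set (ℝ × ℝ)) : Prop :=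
  ∃ z ∉ D.skelImage, F = connectedComponentIn D.skelImageᶜ z

/-- `κ` is a kite path for the crossing of `uv` and `wx` joining the consecutive
endpoints `u` and `w`: a shortest `(u,w)`-path all of whose edges are uncrossed and whose
internal vertices have degree `2`, such that the part of the arc of `uv` from `u` to the
crossing point, the arcs of `κ`, and the part of the arc of `wx` from the crossing point
to `w` together bound a face of the drawing. -/
def IsKitePath (D : PlaneDrawing G) (u v w x : V) (κ : G.Walk u w) : Prop :=
  D.Crosses u v w x ∧ κ.IsPath ∧ (∀ q : G.Walk u w, κ.length ≤ q.length) ∧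
  (∀ e ∈ κ.edges, D.UncrossedE e) ∧
  (∀ y ∈ κ.support, y ≠ u → y ≠ w → (G.neighborSet y).ncard = 2) ∧
  ∃ t s' : ℝ, t ∈ Set.Ioo (0:ℝ) 1 ∧ s' ∈ Set.Ioo (0:ℝ) 1 ∧ D.arc u v t = D.arc w x s' ∧
    ∃ F, D.IsFace F ∧
      frontier F = (D.arc u v '' Set.Icc 0 t) ∪ (⋃ e ∈ κ.edges, D.edgeArcSet e) ∪
        (D.arc w x '' Set.Icc 0 s')

/-- The drawing is kite-augmented: for every crossing and every pair of consecutive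
endpoints there is a kite path joining them. -/
def KiteAugmented (D : PlaneDrawing G) : Prop :=
  ∀ u v w x, D.Crosses u v w x → ∃ κ : G.Walk u w, D.IsKitePath u v w x κ

/-- The face-distance between any two distinct crossing points of the drawing is at
least `f`: every chain of faces `Fc 0, …, Fc (j-1)` linked by vertex or crossing points
`pts 0 = c₁, pts 1, …, pts j = c₂` on the boundaries of consecutive faces (i.e. every
path in the radial graph between the two crossing points) uses at least `f` faces. -/
def FaceDistGe (D : PlaneDrawing G) (f : ℕ) : Prop :=
  ∀ c₁ c₂ : ℝ × ℝ, D.IsCrossingPoint c₁ → D.IsCrossingPoint c₂ → c₁ ≠ c₂ →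
    ∀ (j : ℕ) (Fc : Fin j → Set (ℝ × ℝ)) (pts : Fin (j + 1) → ℝ × ℝ),
      (∀ i, D.IsFace (Fc i)) →
      (∀ i, pts i ∈ Set.range D.vpos ∨ D.IsCrossingPoint (pts i)) →
      pts 0 = c₁ → pts (Fin.last j) = c₂ →
      (∀ i : Fin j, pts i.castSucc ∈ frontier (Fc i) ∧ pts i.succ ∈ frontier (Fc i)) →
      f ≤ j

end PlaneDrawing

end CopsRobbers
namespace CopsRobbers

/-- `H` is (a copy of) the `k`-subdivision `G^(k)` of `G`: `φ` embeds the vertices of `G`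
into those of `H`, and for every ordered adjacent pair `u v` of `G`, the vertices
`p u v 0, p u v 1, …, p u v k` form the path of length `k` of `H` replacing the
edge `uv` (traversed in the opposite direction for `p v u`); the interior vertices
of these paths are fresh and pairwise disjoint for distinct edges, the edges of `H` are
exactly the edges of these paths, and every vertex of `H` arises from `G` or from a
path. -/
structure IsKSubdivision {V W : Type} (G : SimpleGraph V) (k : ℕ) (H : SimpleGraph W)
    (φ : V → W) (p : V → V → ℕ → W) : Prop where
  phi_inj : Function.Injective φ
  start : ∀ u v, G.Adj u v → p u v 0 = φ u
  finish : ∀ u v, G.Adj u v → p u v k = φ v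
  rev : ∀ u v, G.Adj u v → ∀ i ≤ k, p u v i = p v u (k - i)
  inj : ∀ u v, G.Adj u v → ∀ i ≤ k, ∀ j ≤ k, p u v i = p u v j → i = j
  internal : ∀ u v, G.Adj u v → ∀ i, 0 < i → i < k → p u v i ∉ Set.range φ
  disjoint : ∀ u v u' v', G.Adj u v → G.Adj u' v' → s(u, v) ≠ s(u', v') →
    ∀ i j, 0 < i → i < k → 0 < j → j < k → p u v i ≠ p u' v' j
  adj_iff : ∀ a b : W, H.Adj a b ↔ ∃ u v, ∃ _ : G.Adj u v, ∃ i < k,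
    (a = p u v i ∧ b = p u v (i + 1)) ∨ (b = p u v i ∧ a = p u v (i + 1))
  cover : ∀ w : W, (∃ v, w = φ v) ∨ ∃ u v, ∃ _ : G.Adj u v, ∃ i ≤ k, w = p u v i

/-- `H` together with its drawing `DH` is the subdivision `G^(k)` of the drawn graph
`(G, D)`, drawn by placing the subdivision vertices of each edge on its arc, so that the
crossings of `G^(k)` are exactly the crossings of `G`, occurring between subdivision
edges. -/
structure IsDrawnSubdivision {V W : Type} (G : SimpleGraph V) (D : PlaneDrawing G)
    (k : ℕ) (H : SimpleGraph W) (DH : PlaneDrawing H) (φ : V → W)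
    (p : V → V → ℕ → W) : Prop where
  sub : IsKSubdivision G k H φ p
  vpos_eq : ∀ v, DH.vpos (φ v) = D.vpos v
  on_arc : ∀ u v, G.Adj u v → ∀ i ≤ k, DH.vpos (p u v i) ∈ D.arc u v '' Set.Icc (0:ℝ) 1
  arcs_cover : ∀ u v, G.Adj u v →
    (⋃ i ∈ Finset.range k, DH.edgeArcSet s(p u v i, p u v (i + 1))) =
      D.arc u v '' Set.Icc (0:ℝ) 1
  cross_of : ∀ a b c e, DH.Crosses a b c e →
    ∃ u v w x, D.Crosses u v w x ∧ ∃ i < k, ∃ j < k,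
      s(a, b) = s(p u v i, p u v (i + 1)) ∧ s(c, e) = s(p w x j, p w x (j + 1))
  of_cross : ∀ u v w x, D.Crosses u v w x → ∃ i < k, ∃ j < k,
      DH.Crosses (p u v i) (p u v (i + 1)) (p w x j) (p w x (j + 1))

/-- `(H, DH)` is a 1-planarisation of the drawn graph `(G, D)`: a drawn subdivision
`G^(k)` of `G` whose drawing is 1-plane. -/
structure IsOnePlanarisation {V W : Type} (G : SimpleGraph V) (D : PlaneDrawing G)
    (k : ℕ) (H : SimpleGraph W) (DH : PlaneDrawing H) (φ : V → W)
    (p : V → V → ℕ → W) : Prop where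
  drawn : IsDrawnSubdivision G D k H DH φ p
  oneplane : DH.OnePlane

/-- `(K, DK)` is the kite-augmentation of the 1-plane drawn graph `(H, DH)` via the
embedding `ψ`: the drawing of `H` is kept unchanged, and for every crossing and every
pair of consecutive endpoints a new path with fresh internal vertices, of length equal to
the distance of the two endpoints in `H`, is added and drawn so that the resulting
drawing is a kite-augmented 1-plane drawing with the same crossings. -/
structure IsKiteAugmentationOf {W U : Type} {H : SimpleGraph W} (DH : PlaneDrawing H)
    {K : SimpleGraph U} (DK : PlaneDrawing K) (ψ : W → U) : Prop where
  inj : Function.Injective ψ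
  adj_iff : ∀ a b, K.Adj (ψ a) (ψ b) ↔ H.Adj a b
  vpos_eq : ∀ a, DK.vpos (ψ a) = DH.vpos a
  arc_eq : ∀ a b, H.Adj a b → ∀ t ∈ Set.Icc (0:ℝ) 1, DK.arc (ψ a) (ψ b) t = DH.arc a b t
  oneplane : DK.OnePlane
  kite : DK.KiteAugmented
  new_path : ∀ u v w x, DH.Crosses u v w x →
    ∃ κ : K.Walk (ψ u) (ψ w), κ.IsPath ∧ κ.length = H.dist u w ∧
      ∀ y ∈ κ.support, y ≠ ψ u → y ≠ ψ w → y ∉ Set.range ψ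
  new_deg : ∀ z : U, z ∉ Set.range ψ → (K.neighborSet z).ncard = 2
  cross_of : ∀ a b c e, DK.Crosses a b c e →
    ∃ u v w x, DH.Crosses u v w x ∧ s(a, b) = s(ψ u, ψ v) ∧ s(c, e) = s(ψ w, ψ x)

end CopsRobbers

/-!
Each cop of `G` plays the shadow of a cop of `G^(k)`. A move of the robber in `G` is replayed in
`G^(k)` as `k` steps along the subdivided edge, and the `G`-cop stays at the last branch vertex
visited by its `G^(k)`-counterpart. Two visits of branch vertices fewer than `k` steps apart are
visits of the same vertex, so the shadow moves along at most one edge per round. When the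
`G^(k)`-cop comes within distance `d` of the robber, its position at the start of that round is
within `d + k` of the robber's next branch vertex; then one more move brings the shadow within
`(d + k - 1) / k = ⌈d / k⌉` of the robber in `G`, and the `G`-cop stays there for good.
-/

namespace CopsRobbers

section Freeze

variable {α β : Type*} (B : List α → β) (D : List α → Option β)

noncomputable def freeze (h : List α) : β :=
  (h.inits.findSome? D).getD (B h)

theorem findSome?_inits_append_singleton (h : List α) (x : α) :
    (h ++ [x]).inits.findSome? D = (h.inits.findSome? D).or (D (h ++ [x])) := by
  simp [List.inits_append, List.findSome?_append]

variable {B D}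

theorem freeze_step {R : β → β → Prop} (hR : ∀ b, R b b)
    (hB : ∀ h x, R (B h) (B (h ++ [x]))) (hD : ∀ h x b, D (h ++ [x]) = some b → R (B h) b)
    (h : List α) (x : α) : R (freeze B D h) (freeze B D (h ++ [x])) := by
  unfold freeze
  rw [findSome?_inits_append_singleton]
  rcases hh : h.inits.findSome? D with _ | b
  · rcases hx : D (h ++ [x]) with _ | b
    · exact hB h x
    · exact hD h x b hx
  · exact hR b

theorem exists_eq_some_freeze_ofFn (r : ℕ → α) {N : ℕ} {a : β}
    (hN : D (List.ofFn fun m : Fin N => r m) = some a) :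
    ∃ n, D (List.ofFn fun m : Fin n => r m) =
      some (freeze B D (List.ofFn fun m : Fin n => r m)) := by
  have close (h : List α) (hfirst : h.inits.findSome? D = D h) (hh : D h ≠ none) :
      D h = some (freeze B D h) := by
    obtain ⟨b, hb⟩ := Option.ne_none_iff_exists'.1 hh
    rw [freeze, hfirst, hb]
    rfl
  suffices key : ∀ N, (List.ofFn fun m : Fin N => r m).inits.findSome? D ≠ none →
      ∃ n, D (List.ofFn fun m : Fin n => r m) =
        some (freeze B D (List.ofFn fun m : Fin n => r m)) by
    refine key N fun hnone => ?_
    rw [List.findSome?_eq_none_iff] at hnone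
    simp [hnone _ ((List.mem_inits _ _).2 List.prefix_rfl)] at hN
  intro N
  induction N with
  | zero =>
    intro hsome
    have hfirst : ([] : List α).inits.findSome? D = D [] := by simp
    exact ⟨0, close [] hfirst (hfirst ▸ hsome)⟩
  | succ N ih =>
    rw [List.ofFn_succ_last]
    simp only [Fin.val_castSucc, Fin.val_last]
    rw [findSome?_inits_append_singleton]
    intro hsome
    rcases hprev : (List.ofFn fun m : Fin N => r m).inits.findSome? D with _ | b
    · rw [hprev, Option.none_or] at hsome
      refine ⟨N + 1, ?_⟩
      rw [List.ofFn_succ_last]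
      simp only [Fin.val_castSucc, Fin.val_last]
      exact close _ (by rw [findSome?_inits_append_singleton, hprev, Option.none_or]) hsome
    · exact ih (by simp [hprev])

end Freeze

section Walks

variable {X : Type} {Γ : SimpleGraph X}

theorem WithinDist.mono {m n : ℕ} {u v : X} (h : WithinDist Γ m u v) (hmn : m ≤ n) :
    WithinDist Γ n u v :=
  let ⟨w, hw⟩ := h
  ⟨w, hw.trans hmn⟩

theorem WithinDist.trans {m n : ℕ} {u v x : X} (huv : WithinDist Γ m u v)
    (hvx : WithinDist Γ n v x) : WithinDist Γ (m + n) u x :=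
  let ⟨w, hw⟩ := huv
  let ⟨w', hw'⟩ := hvx
  ⟨w.append w', by rw [Walk.length_append]; omega⟩

theorem withinDist_of_steps {c : ℕ → X} (hc : ∀ τ, Step Γ (c τ) (c (τ + 1)))
    {t₁ t₂ : ℕ} (h : t₁ ≤ t₂) : WithinDist Γ (t₂ - t₁) (c t₁) (c t₂) := by
  induction t₂, h using Nat.le_induction with
  | base => exact ⟨Walk.nil, by simp⟩
  | succ t₂ _ ih =>
    obtain ⟨w, hw⟩ := ih
    rcases hc t₂ with he | ha
    · exact ⟨w.copy rfl he, by rw [Walk.length_copy]; omega⟩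
    · exact ⟨w.concat ha, by rw [Walk.length_concat]; omega⟩

theorem step_ofFn {q : ℕ} {F : List X → Fin q → X}
    (hF : ∀ hist x i, Step Γ (F hist i) (F (hist ++ [x]) i)) (i : Fin q) (f : ℕ → X)
    (τ : ℕ) : Step Γ (F (List.ofFn fun m : Fin τ => f m) i)
      (F (List.ofFn fun m : Fin (τ + 1) => f m) i) := by
  rw [List.ofFn_succ_last]
  exact hF _ _ i

end Walks

theorem copsWin_card {W : Type} [Fintype W] (H : SimpleGraph W) (d : ℕ) :
    CopsWin H d (Fintype.card W) := by
  refine ⟨fun _ => (Fintype.equivFin W).symm, fun _ _ _ => Or.inl rfl, fun r _ => ?_⟩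
  refine ⟨0, Fintype.equivFin W (r 0), Or.inl ⟨Walk.nil.copy ?_ rfl, by simp⟩⟩
  exact (Equiv.symm_apply_apply _ _).symm

theorem partialInv_eq_none {α β : Type*} {f : α → β} {b : β} (hb : b ∉ Set.range f) :
    Function.partialInv f b = none := by
  simp only [Set.mem_range, not_exists] at hb
  simp [Function.partialInv, hb]

variable {V W : Type} {G : SimpleGraph V} {H : SimpleGraph W} {k : ℕ} {φ : V → W}
  {p : V → V → ℕ → W}

-- A history of `m + 1` robber positions is replayed as the positions `0, …, m * k` of `liftPath`.
def liftLength (k : ℕ) : ℕ → ℕ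
  | 0 => 0
  | m + 1 => m * k + 1

theorem liftLength_le_succ (n : ℕ) : liftLength k n ≤ liftLength k (n + 1) := by
  cases n <;> simp [liftLength, Nat.succ_mul]

theorem liftLength_succ_le (hk : 0 < k) (n : ℕ) :
    liftLength k (n + 1) ≤ liftLength k n + k := by
  cases n <;> simp [liftLength, Nat.succ_mul]; omega

theorem exists_le_mul_liftLength_le (hk : 0 < k) (T : ℕ) :
    ∃ M, T ≤ M * k ∧ liftLength k M ≤ T := by
  rcases Nat.eq_zero_or_pos T with rfl | hT
  · exact ⟨0, by simp, le_rfl⟩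
  · refine ⟨(T - 1) / k + 1, ?_, ?_⟩
    · have := Nat.lt_div_mul_add (a := T - 1) hk
      rw [Nat.succ_mul]; omega
    · have := Nat.div_mul_le_self (T - 1) k
      simp only [liftLength]; omega

namespace IsKSubdivision

def OnEdgeFrom (_ : IsKSubdivision G k H φ p) (s : V) (j : ℕ) (w : W) : Prop :=
  (j = 0 ∧ w = φ s) ∨ (0 < j ∧ j < k ∧ ∃ c, G.Adj s c ∧ w = p s c j)

variable {S : IsKSubdivision G k H φ p}

theorem OnEdgeFrom.lt (hk : 0 < k) {s : V} {j : ℕ} {w : W} (h : S.OnEdgeFrom s j w) : j < k := by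
  rcases h with ⟨rfl, _⟩ | ⟨_, h, _⟩ <;> assumption

theorem OnEdgeFrom.of_phi {s b : V} {j : ℕ} (h : S.OnEdgeFrom s j (φ b)) : s = b ∧ j = 0 := by
  rcases h with ⟨hj, he⟩ | ⟨h0, hlt, c, hadj, he⟩
  · exact ⟨(S.phi_inj he).symm, hj⟩
  · exact absurd ⟨b, he⟩ (S.internal s c hadj j h0 hlt)

theorem onEdgeFrom_phi (s : V) : S.OnEdgeFrom s 0 (φ s) := Or.inl ⟨rfl, rfl⟩

theorem exists_onEdgeFrom (S : IsKSubdivision G k H φ p) (w : W) :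
    ∃ s j, S.OnEdgeFrom s j w := by
  rcases S.cover w with ⟨v, rfl⟩ | ⟨u, v, huv, i, hik, rfl⟩
  · exact ⟨v, 0, onEdgeFrom_phi v⟩
  · rcases Nat.eq_zero_or_pos i with rfl | h0
    · exact ⟨u, 0, Or.inl ⟨rfl, S.start u v huv⟩⟩
    · rcases eq_or_lt_of_le hik with rfl | hlt
      · exact ⟨v, 0, Or.inl ⟨rfl, S.finish u v huv⟩⟩
      · exact ⟨u, i, Or.inr ⟨h0, hlt, v, huv, rfl⟩⟩

theorem eq_of_interior_eq (S : IsKSubdivision G k H φ p) {u v u' v' : V} {i j : ℕ}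
    (huv : G.Adj u v) (hu'v' : G.Adj u' v') (hi : 0 < i) (hik : i < k) (hj : 0 < j)
    (hjk : j < k) (he : p u v i = p u' v' j) :
    (u = u' ∧ v = v' ∧ i = j) ∨ (u = v' ∧ v = u' ∧ i = k - j) := by
  by_cases hs : s(u, v) = s(u', v')
  · rw [Sym2.eq_iff] at hs
    rcases hs with ⟨rfl, rfl⟩ | ⟨rfl, rfl⟩
    · exact Or.inl ⟨rfl, rfl, S.inj u v huv i hik.le j hjk.le he⟩
    · refine Or.inr ⟨rfl, rfl, S.inj u v huv i hik.le (k - j) (by omega) ?_⟩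
      rw [he, S.rev v u huv.symm j hjk.le]
  · exact absurd he (S.disjoint u v u' v' huv hu'v' hs i j hi hik hj hjk)

theorem exists_eq_path_of_adj (S : IsKSubdivision G k H φ p) {w w' : W} (h : H.Adj w w') :
    ∃ u v, G.Adj u v ∧ ∃ i < k, w = p u v i ∧ w' = p u v (i + 1) := by
  obtain ⟨u, v, huv, i, hik, ⟨h1, h2⟩ | ⟨h1, h2⟩⟩ := (S.adj_iff w w').1 h
  · exact ⟨u, v, huv, i, hik, h1, h2⟩
  · refine ⟨v, u, huv.symm, k - i - 1, by omega, ?_, ?_⟩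
    · rw [h2, S.rev u v huv (i + 1) (by omega), Nat.sub_sub]
    · rw [h1, S.rev u v huv i (by omega), show k - i - 1 + 1 = k - i by omega]

theorem adj_path (S : IsKSubdivision G k H φ p) {u v : V} {i : ℕ} (huv : G.Adj u v)
    (hik : i < k) : H.Adj (p u v i) (p u v (i + 1)) :=
  (S.adj_iff _ _).2 ⟨u, v, huv, i, hik, Or.inl ⟨rfl, rfl⟩⟩

theorem OnEdgeFrom.of_adj (hk : 0 < k) {s : V} {j : ℕ} {w w' : W} (ho : S.OnEdgeFrom s j w)
    (ha : H.Adj w w') :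
    (∃ j', S.OnEdgeFrom s j' w' ∧ j' ≤ j + 1 ∧ j ≤ j' + 1) ∨
      (j + 1 = k ∧ ∃ c, G.Adj s c ∧ w' = φ c) := by
  obtain ⟨u, v, huv, i, hik, rfl, rfl⟩ := S.exists_eq_path_of_adj ha
  rcases ho with ⟨rfl, hws⟩ | ⟨hj0, hjk, c, hsc, hwc⟩
  · have hi0 : i = 0 := by
      by_contra hne
      exact S.internal u v huv i (by omega) hik ⟨s, hws.symm⟩
    subst hi0
    obtain rfl : s = u := S.phi_inj (by rw [← hws, S.start u v huv])
    rcases Nat.lt_or_ge 1 k with hk1 | hk1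
    · exact Or.inl ⟨1, Or.inr ⟨one_pos, hk1, v, huv, rfl⟩, le_rfl, by omega⟩
    · obtain rfl : k = 1 := by omega
      exact Or.inr ⟨rfl, v, huv, S.finish s v huv⟩
  · have hi0 : 0 < i := by
      by_contra hne
      obtain rfl : i = 0 := by omega
      exact S.internal s c hsc j hj0 hjk ⟨u, by rw [← hwc, S.start u v huv]⟩
    rcases S.eq_of_interior_eq hsc huv hj0 hjk hi0 hik hwc.symm with
      ⟨rfl, rfl, rfl⟩ | ⟨rfl, rfl, rfl⟩
    · by_cases hend : j + 1 = k
      · exact Or.inr ⟨hend, c, hsc, by rw [hend, S.finish s c hsc]⟩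
      · exact Or.inl ⟨j + 1, Or.inr ⟨by omega, by omega, c, hsc, rfl⟩, by omega, by omega⟩
    · have hback : p c s (i + 1) = p s c (k - i - 1) := by
        rw [S.rev c s hsc.symm (i + 1) (by omega), Nat.sub_sub]
      rw [hback]
      by_cases hj1 : k - i = 1
      · refine Or.inl ⟨0, Or.inl ⟨rfl, ?_⟩, by omega, by omega⟩
        rw [hj1, S.start s c hsc]
      · exact Or.inl
          ⟨k - i - 1, Or.inr ⟨by omega, by omega, c, hsc, rfl⟩, by omega, by omega⟩

theorem OnEdgeFrom.exists_withinDist (hk : 0 < k) {w w' : W} (Q : H.Walk w w') {b : V}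
    (hb : w' = φ b) {s : V} {j : ℕ} (ho : S.OnEdgeFrom s j w) :
    ∃ a m, WithinDist G m a b ∧
      ((a = s ∧ k * m + j ≤ Q.length) ∨ (G.Adj s a ∧ k * m + (k - j) ≤ Q.length)) := by
  induction Q generalizing s j with
  | nil =>
    obtain ⟨rfl, rfl⟩ := (hb ▸ ho).of_phi
    exact ⟨s, 0, ⟨Walk.nil, le_rfl⟩, Or.inl ⟨rfl, by simp⟩⟩
  | cons ha Q ih =>
    rw [Walk.length_cons]
    rcases ho.of_adj hk ha with ⟨j', ho', hj'⟩ | ⟨hj, c, hsc, rfl⟩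
    · obtain ⟨a, m, hP, ⟨rfl, hlen⟩ | ⟨hadj, hlen⟩⟩ := ih hb ho'
      · exact ⟨a, m, hP, Or.inl ⟨rfl, by omega⟩⟩
      · exact ⟨a, m, hP, Or.inr ⟨hadj, by omega⟩⟩
    · obtain ⟨a, m, hP, ⟨rfl, hlen⟩ | ⟨hadj, hlen⟩⟩ := ih hb (onEdgeFrom_phi c)
      · exact ⟨a, m, hP, Or.inr ⟨hsc, by omega⟩⟩
      · obtain ⟨P, hP⟩ := hP
        refine ⟨c, m + 1, ⟨Walk.cons hadj P, by rw [Walk.length_cons]; omega⟩,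
          Or.inr ⟨hsc, ?_⟩⟩
        rw [Nat.mul_succ]; omega

theorem eq_of_withinDist_phi (S : IsKSubdivision G k H φ p) (hk : 0 < k) {a b : V} {l : ℕ}
    (hab : WithinDist H l (φ a) (φ b)) (hl : l < k) : a = b := by
  obtain ⟨Q, hQ⟩ := hab
  obtain ⟨a', m, ⟨P, hP⟩, ⟨rfl, hlen⟩ | ⟨_, hlen⟩⟩ :=
    (onEdgeFrom_phi (S := S) a).exists_withinDist hk Q rfl
  · have hm : m = 0 := by
      by_contra hm
      have := Nat.mul_le_mul_left k (Nat.one_le_iff_ne_zero.2 hm)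
      omega
    exact P.eq_of_length_eq_zero (by omega)
  · omega

theorem OnEdgeFrom.exists_step_withinDist (hk : 0 < k) {s : V} {j : ℕ} {w : W} {b : V} {d : ℕ}
    (ho : S.OnEdgeFrom s j w) (hw : WithinDist H (d + k) w (φ b)) :
    ∃ a, Step G s a ∧ WithinDist G ((d + k - 1) / k) a b := by
  obtain ⟨Q, hQ⟩ := hw
  suffices ∃ a m, Step G s a ∧ WithinDist G m a b ∧ k * m ≤ d + k - 1 by
    obtain ⟨a, m, hsa, hab, hm⟩ := this
    exact ⟨a, hsa, hab.mono ((Nat.le_div_iff_mul_le hk).2 (by rw [mul_comm]; exact hm))⟩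
  have hjk := ho.lt hk
  obtain ⟨a, m, hab, ⟨rfl, hlen⟩ | ⟨hadj, hlen⟩⟩ := ho.exists_withinDist hk Q rfl
  · rcases Nat.eq_zero_or_pos j with rfl | hj
    · obtain ⟨P, hP⟩ := hab
      cases P with
      | nil => exact ⟨_, 0, Or.inl rfl, ⟨Walk.nil, le_rfl⟩, by simp⟩
      | cons hadj P =>
        refine ⟨_, P.length, Or.inr hadj, ⟨P, le_rfl⟩, ?_⟩
        rw [Walk.length_cons] at hP
        have := Nat.mul_le_mul_left k hP
        rw [Nat.mul_succ] at this
        omega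
    · exact ⟨a, m, Or.inl rfl, hab, by omega⟩
  · exact ⟨a, m, Or.inr hadj, hab, by omega⟩

theorem OnEdgeFrom.update (hk : 0 < k) {s : V} {j : ℕ} {w w' : W} (ho : S.OnEdgeFrom s j w)
    (hw : Step H w w') :
    (∃ j', S.OnEdgeFrom ((Function.partialInv φ w').getD s) j' w') ∧
      Step G s ((Function.partialInv φ w').getD s) := by
  by_cases hφ : w' ∈ Set.range φ
  · obtain ⟨v, rfl⟩ := hφ
    rw [Function.partialInv_left S.phi_inj, Option.getD_some]
    refine ⟨⟨0, onEdgeFrom_phi v⟩, ?_⟩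
    rcases hw with rfl | ha
    · exact Or.inl ho.of_phi.1
    · rcases ho.of_adj hk ha with ⟨j', ho', -⟩ | ⟨-, c, hsc, hc⟩
      · exact Or.inl ho'.of_phi.1
      · rw [S.phi_inj hc]; exact Or.inr hsc
  · rw [partialInv_eq_none hφ, Option.getD_none]
    refine ⟨?_, Or.inl rfl⟩
    rcases hw with rfl | ha
    · exact ⟨j, ho⟩
    · rcases ho.of_adj hk ha with ⟨j', ho', -⟩ | ⟨-, c, -, rfl⟩
      · exact ⟨j', ho'⟩
      · exact absurd ⟨c, rfl⟩ hφ

noncomputable def shadow (S : IsKSubdivision G k H φ p) (c : ℕ → W) : ℕ → V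
  | 0 => (S.exists_onEdgeFrom (c 0)).choose
  | t + 1 => (Function.partialInv φ (c (t + 1))).getD (S.shadow c t)

theorem shadow_congr {c c' : ℕ → W} {t : ℕ} (h : ∀ τ ≤ t, c τ = c' τ) :
    S.shadow c t = S.shadow c' t := by
  induction t with
  | zero => simp only [shadow, h 0 le_rfl]
  | succ t ih => simp only [shadow, ih fun τ hτ => h τ (by omega), h (t + 1) le_rfl]

theorem shadow_succ_eq_or (c : ℕ → W) (t : ℕ) :
    S.shadow c (t + 1) = S.shadow c t ∨ c (t + 1) = φ (S.shadow c (t + 1)) := by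
  by_cases hφ : c (t + 1) ∈ Set.range φ
  · obtain ⟨v, hv⟩ := hφ
    right
    rw [shadow, ← hv, Function.partialInv_left S.phi_inj, Option.getD_some]
  · left
    rw [shadow, partialInv_eq_none hφ, Option.getD_none]

section Shadow

variable {c : ℕ → W}

theorem onEdgeFrom_shadow (hk : 0 < k) (hc : ∀ τ, Step H (c τ) (c (τ + 1))) (t : ℕ) :
    ∃ j, S.OnEdgeFrom (S.shadow c t) j (c t) := by
  induction t with
  | zero => exact (S.exists_onEdgeFrom (c 0)).choose_spec
  | succ t ih =>
    obtain ⟨j, ho⟩ := ih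
    exact (ho.update hk (hc t)).1

theorem step_shadow_succ (hk : 0 < k) (hc : ∀ τ, Step H (c τ) (c (τ + 1))) (t : ℕ) :
    Step G (S.shadow c t) (S.shadow c (t + 1)) :=
  let ⟨_, ho⟩ := onEdgeFrom_shadow hk hc t
  (ho.update hk (hc t)).2

theorem step_shadow_add (hk : 0 < k) (hc : ∀ τ, Step H (c τ) (c (τ + 1))) (t : ℕ) {δ : ℕ}
    (hδ : δ ≤ k) : Step G (S.shadow c t) (S.shadow c (t + δ)) := by
  suffices h : ∀ δ ≤ k, Step G (S.shadow c t) (S.shadow c (t + δ)) ∧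
      (S.shadow c (t + δ) = S.shadow c t ∨
        ∃ τ, t < τ ∧ τ ≤ t + δ ∧ c τ = φ (S.shadow c (t + δ))) from (h δ hδ).1
  intro δ hδ
  induction δ with
  | zero => exact ⟨Or.inl rfl, Or.inl rfl⟩
  | succ δ ih =>
    obtain ⟨hstep, hvisit⟩ := ih (by omega)
    rcases S.shadow_succ_eq_or c (t + δ) with hsame | hnew
    · rw [← add_assoc, hsame]
      refine ⟨hstep, hvisit.imp_right fun ⟨τ, h1, h2, h3⟩ => ⟨τ, h1, by omega, h3⟩⟩
    · rw [← add_assoc]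
      rcases hvisit with hfirst | ⟨τ, h1, h2, h3⟩
      · rw [← hfirst]
        exact ⟨step_shadow_succ hk hc _, Or.inr ⟨t + δ + 1, by omega, le_rfl, hnew⟩⟩
      · have hback := (withinDist_of_steps hc (show τ ≤ t + δ + 1 by omega))
        rw [h3, hnew] at hback
        rw [← S.eq_of_withinDist_phi hk hback (by omega)]
        exact ⟨hstep, Or.inr ⟨τ, h1, by omega, h3⟩⟩

end Shadow

open Classical in
noncomputable def liftMove (_ : IsKSubdivision G k H φ p) (u x : V) (j : ℕ) : W :=
  if G.Adj u x then p u x j else φ u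

theorem liftMove_start (u x : V) : S.liftMove u x 0 = φ u := by
  unfold liftMove
  split_ifs with hux
  · exact S.start u x hux
  · rfl

theorem liftMove_finish {u x : V} (hux : Step G u x) : S.liftMove u x k = φ x := by
  unfold liftMove
  split_ifs with hadj
  · exact S.finish u x hadj
  · rcases hux with rfl | h
    · rfl
    · exact absurd h hadj

theorem step_liftMove (u x : V) {j : ℕ} (hj : j < k) :
    Step H (S.liftMove u x j) (S.liftMove u x (j + 1)) := by
  unfold liftMove
  split_ifs with hadj
  · exact Or.inr (S.adj_path hadj hj)
  · exact Or.inl rfl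

noncomputable def liftPath (S : IsKSubdivision G k H φ p) (r : ℕ → V) (τ : ℕ) : W :=
  S.liftMove (r (τ / k)) (r (τ / k + 1)) (τ % k)

theorem liftPath_mul_add (r : ℕ → V) (hk : 0 < k) (m : ℕ) {j : ℕ} (hj : j < k) :
    S.liftPath r (m * k + j) = S.liftMove (r m) (r (m + 1)) j := by
  have hdiv : (m * k + j) / k = m := by
    rw [add_comm, Nat.add_mul_div_right _ _ hk, Nat.div_eq_of_lt hj, zero_add]
  have hmod : (m * k + j) % k = j := by
    rw [add_comm, Nat.add_mul_mod_self_right, Nat.mod_eq_of_lt hj]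
  rw [liftPath, hdiv, hmod]

theorem liftPath_mul (r : ℕ → V) (hk : 0 < k) (m : ℕ) : S.liftPath r (m * k) = φ (r m) := by
  simpa using S.liftPath_mul_add r hk m hk |>.trans (liftMove_start _ _)

theorem step_liftPath (r : ℕ → V) (hk : 0 < k) (hr : ∀ n, Step G (r n) (r (n + 1)))
    (τ : ℕ) : Step H (S.liftPath r τ) (S.liftPath r (τ + 1)) := by
  obtain ⟨m, j, hj, rfl⟩ : ∃ m j, j < k ∧ τ = m * k + j :=
    ⟨τ / k, τ % k, Nat.mod_lt τ hk, (Nat.div_add_mod' τ k).symm⟩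
  rw [S.liftPath_mul_add r hk m hj]
  rcases Nat.lt_or_ge (j + 1) k with hj1 | hj1
  · rw [add_assoc, S.liftPath_mul_add r hk m hj1]
    exact step_liftMove _ _ hj
  · obtain rfl : j + 1 = k := by omega
    rw [add_assoc, ← Nat.succ_mul, S.liftPath_mul r hk, ← liftMove_finish (S := S) (hr m)]
    exact step_liftMove _ _ hj

theorem liftPath_congr (hk : 0 < k) {r r' : ℕ → V} {N τ : ℕ} (h : ∀ n ≤ N, r n = r' n)
    (hτ : τ ≤ N * k) : S.liftPath r τ = S.liftPath r' τ := by
  rcases hτ.lt_or_eq with hlt | rfl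
  · have hN : τ / k < N := (Nat.div_lt_iff_lt_mul hk).2 hlt
    rw [liftPath, liftPath, h _ hN.le, h _ hN]
  · rw [S.liftPath_mul r hk, S.liftPath_mul r' hk, h N le_rfl]

variable {q : ℕ} {FH : List W → Fin q → W} {i : Fin q}

-- Beyond the end of the history the replayed robber trajectory is junk; only the times up to
-- `liftLength k h.length` are used.
noncomputable def copPath (S : IsKSubdivision G k H φ p) (FH : List W → Fin q → W)
    (i : Fin q) : List V → ℕ → W
  | [] => fun _ => FH [] i
  | a :: t => fun τ => FH (List.ofFn fun m : Fin τ => S.liftPath (fun n => (a :: t).getD n a) m) i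

theorem copPath_ofFn (hk : 0 < k) (r : ℕ → V) {N τ : ℕ} (hτ : τ ≤ liftLength k N) :
    S.copPath FH i (List.ofFn fun m : Fin N => r m) τ =
      FH (List.ofFn fun m : Fin τ => S.liftPath r m) i := by
  cases N with
  | zero =>
    obtain rfl : τ = 0 := by simpa [liftLength] using hτ
    rfl
  | succ N =>
    have hget : ∀ n ≤ N, (List.ofFn fun m : Fin (N + 1) => r m).getD n (r 0) = r n :=
      fun n hn => by rw [List.getD_eq_getElem _ _ (by simp; omega), List.getElem_ofFn]
    rw [List.ofFn_succ] at hget ⊢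
    show FH (List.ofFn _) i = _
    congr 2
    funext m
    exact S.liftPath_congr hk hget (by simp only [liftLength] at hτ; omega)

theorem copPath_append (hk : 0 < k) (h : List V) (x : V) {τ : ℕ}
    (hτ : τ ≤ liftLength k h.length) : S.copPath FH i (h ++ [x]) τ = S.copPath FH i h τ := by
  set r : ℕ → V := fun n => (h ++ [x]).getD n x
  have hlong : h ++ [x] = List.ofFn fun m : Fin (h.length + 1) => r m := by
    apply List.ext_getElem (by simp)
    intro n h₁ h₂
    rw [List.getElem_ofFn]
    exact (List.getD_eq_getElem _ _ h₁).symm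
  have hshort : h = List.ofFn fun m : Fin h.length => r m := by
    apply List.ext_getElem (by simp)
    intro n h₁ h₂
    rw [List.getElem_ofFn]
    simp only [r]
    rw [List.getD_eq_getElem _ _ (by simp; omega), List.getElem_append_left h₁]
  rw [hlong, copPath_ofFn hk r (hτ.trans (liftLength_le_succ _))]
  conv_rhs => rw [hshort]
  rw [copPath_ofFn hk r hτ]

theorem step_copPath (hFH : ∀ hist x i, Step H (FH hist i) (FH (hist ++ [x]) i)) (h : List V)
    (τ : ℕ) : Step H (S.copPath FH i h τ) (S.copPath FH i h (τ + 1)) := by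
  cases h with
  | nil => exact Or.inl rfl
  | cons a t => exact step_ofFn hFH i _ τ

noncomputable def simBase (S : IsKSubdivision G k H φ p) (FH : List W → Fin q → W) (i : Fin q)
    (h : List V) : V :=
  S.shadow (S.copPath FH i h) (liftLength k h.length)

open Classical in
noncomputable def simTarget (S : IsKSubdivision G k H φ p) (FH : List W → Fin q → W)
    (i : Fin q) (d : ℕ) (h : List V) : Option V :=
  if ha : ∃ a, Step G (S.simBase FH i h.dropLast) a ∧
      ∃ v ∈ h.getLast?, WithinDist G ((d + k - 1) / k) a v then some ha.choose else none

noncomputable def simStrategy (S : IsKSubdivision G k H φ p) (FH : List W → Fin q → W)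
    (d : ℕ) (h : List V) (i : Fin q) : V :=
  freeze (S.simBase FH i) (S.simTarget FH i d) h

theorem simTarget_spec {d : ℕ} {h : List V} {a : V} (ha : S.simTarget FH i d h = some a) :
    Step G (S.simBase FH i h.dropLast) a ∧
      ∃ v ∈ h.getLast?, WithinDist G ((d + k - 1) / k) a v := by
  unfold simTarget at ha
  split_ifs at ha with hex
  cases ha
  exact hex.choose_spec

theorem step_simBase (hk : 0 < k) (hFH : ∀ hist x i, Step H (FH hist i) (FH (hist ++ [x]) i))
    (h : List V) (x : V) : Step G (S.simBase FH i h) (S.simBase FH i (h ++ [x])) := by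
  have hlen : liftLength k (h ++ [x]).length = liftLength k h.length +
      (liftLength k (h.length + 1) - liftLength k h.length) := by
    rw [List.length_append, List.length_singleton, Nat.add_sub_cancel' (liftLength_le_succ _)]
  rw [simBase, simBase, hlen, S.shadow_congr fun τ hτ => (copPath_append hk h x hτ).symm]
  exact step_shadow_add hk (step_copPath hFH _) _
    (by have := liftLength_succ_le hk h.length; omega)

theorem step_simStrategy (hk : 0 < k)
    (hFH : ∀ hist x i, Step H (FH hist i) (FH (hist ++ [x]) i)) (d : ℕ) (h : List V) (x : V)
    (i : Fin q) : Step G (S.simStrategy FH d h i) (S.simStrategy FH d (h ++ [x]) i) :=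
  freeze_step (R := Step G) (fun _ => Or.inl rfl) (step_simBase hk hFH)
    (fun h x _ hb => by simpa using (simTarget_spec hb).1) h x

theorem exists_simTarget_ofFn (hk : 0 < k)
    (hFH : ∀ hist x i, Step H (FH hist i) (FH (hist ++ [x]) i)) {d : ℕ} {r : ℕ → V}
    (hr : ∀ n, Step G (r n) (r (n + 1))) {T ε : ℕ} (hε : ε ≤ 1)
    (hcap : WithinDist H d (FH (List.ofFn fun m : Fin (T + ε) => S.liftPath r m) i)
      (S.liftPath r T)) :
    ∃ N a, S.simTarget FH i d (List.ofFn fun m : Fin N => r m) = some a := by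
  -- `M * k` is the time at which the lifted robber reaches his next branch vertex.
  obtain ⟨M, hTM, hMT⟩ := exists_le_mul_liftLength_le hk T
  set c : ℕ → W := fun τ => FH (List.ofFn fun m : Fin τ => S.liftPath r m) i
  have hc : ∀ τ, Step H (c τ) (c (τ + 1)) := step_ofFn hFH i _
  have hbase : S.simBase FH i (List.ofFn fun m : Fin M => r m) = S.shadow c (liftLength k M) := by
    rw [simBase, List.length_ofFn]
    exact S.shadow_congr fun τ hτ => copPath_ofFn hk r hτ
  have hwalk : WithinDist H (d + k) (c (liftLength k M)) (φ (r M)) := by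
    have h₁ := withinDist_of_steps hc (show liftLength k M ≤ T + ε by omega)
    have h₃ := withinDist_of_steps (S.step_liftPath r hk hr) hTM
    rw [S.liftPath_mul r hk] at h₃
    refine ((h₁.trans hcap).trans h₃).mono ?_
    cases M with
    | zero => simp only [liftLength, zero_mul] at hTM ⊢; omega
    | succ M => simp only [liftLength, Nat.succ_mul] at hTM hMT ⊢; omega
  obtain ⟨j, ho⟩ := onEdgeFrom_shadow hk hc (liftLength k M)
  obtain ⟨a, hstep, hdist⟩ := ho.exists_step_withinDist hk hwalk
  refine ⟨M + 1, ?_⟩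
  unfold simTarget
  rw [dif_pos]
  · exact ⟨_, rfl⟩
  rw [List.ofFn_succ_last]
  simp only [Fin.val_castSucc, Fin.val_last, List.dropLast_concat, List.getLast?_concat,
    Option.mem_some_iff]
  exact ⟨a, hbase ▸ hstep, _, rfl, hdist⟩

theorem copsWin_of_copsWin (S : IsKSubdivision G k H φ p) (hk : 0 < k) {d q : ℕ}
    (hH : CopsWin H d q) : CopsWin G ((d + k - 1) / k) q := by
  obtain ⟨FH, hFH, hcap⟩ := hH
  refine ⟨S.simStrategy FH d, step_simStrategy hk hFH d, fun r hr => ?_⟩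
  obtain ⟨T, i, hT⟩ := hcap (S.liftPath r) (S.step_liftPath r hk hr)
  obtain ⟨N, a, hN⟩ :
      ∃ N a, S.simTarget FH i d (List.ofFn fun m : Fin N => r m) = some a := by
    rcases hT with hT | hT
    · exact exists_simTarget_ofFn hk hFH hr (ε := 0) zero_le_one hT
    · exact exists_simTarget_ofFn hk hFH hr le_rfl hT
  obtain ⟨n, hn⟩ := exists_eq_some_freeze_ofFn r hN
  obtain ⟨-, v, hv, hdist⟩ := simTarget_spec hn
  cases n with
  | zero => simp at hv
  | succ n =>
    rw [List.ofFn_succ_last] at hv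
    simp only [List.getLast?_concat, Option.mem_some_iff, Fin.val_last] at hv
    exact ⟨n, i, Or.inr (hv ▸ hdist)⟩

end IsKSubdivision

end CopsRobbers

open CopsRobbers in
theorem statement3_general {V W : Type} [Fintype W] (G : SimpleGraph V)
    (H : SimpleGraph W) (k : ℕ) (hk : 1 ≤ k) (φ : V → W) (p : V → V → ℕ → W)
    (hsub : IsKSubdivision G k H φ p) (d : ℕ) :
    copNumber G ((d + k - 1) / k) ≤ copNumber H d :=
  Nat.sInf_le (hsub.copsWin_of_copsWin hk
    (Nat.sInf_mem (s := {q | CopsWin H d q}) ⟨_, copsWin_card H d⟩))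

open CopsRobbers in
/-- For every finite simple graph `G` and all `d ≥ 0`, `k ≥ 1`,
`c_{⌈d/k⌉}(G) ≤ c_d(G^{(k)})`. -/
theorem statement3 {V W : Type} [Fintype V] [Fintype W] (G : SimpleGraph V)
    (H : SimpleGraph W) (k : ℕ) (hk : 1 ≤ k) (φ : V → W) (p : V → V → ℕ → W)
    (hsub : IsKSubdivision G k H φ p) (d : ℕ) :
    copNumber G ((d + k - 1) / k) ≤ copNumber H d :=
  statement3_general G H k hk φ p hsub d
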